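/- Let X be a finite graph with vertex set Ω, π a correct partition of X, m a matching of WL(X)_π that is pendant or twin with respect to X, and Δ = Ω_-(m). Then WL(X)_π ∖ Δ is separable if and only if WL(X)_π is separable. -/

import Mathlib

/-!
Write `Δ = Ω₋(m)` and `Γ = Ω₊(m)`. These are distinct, hence disjoint, fibers and `m` is a
bijection `Δ → Γ`, so every basis relation of `X` arises from one of `X ∖ Δ` by transposition
and composition with `m`; algebraic isomorphisms commute with both operations.

If `X ∖ Δ` is separable, an algebraic isomorphism `φ` of `X` maps `Δ` to the fiber `Ω₋(φ m)`
and restricts to an algebraic isomorphism of `X ∖ Δ`; a bijection inducing the restriction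
extends along `m` and `φ m` to a bijection inducing `φ`.

Conversely, `X` is combinatorially isomorphic to the configuration on `(Ω ∖ Δ) ⊕ Γ` obtained
from `X ∖ Δ` by adding a copy of the fiber `Γ`. An algebraic isomorphism `ψ` of `X ∖ Δ` lifts
to these duplications, and since the lift respects the two sides, a bijection inducing it
restricts to a bijection inducing `ψ`.
-/

open Set

universe u v

variable {Ω : Type*}

/-- The diagonal relation `1_Δ` of a set `Δ ⊆ Ω`. -/
def diagRel (Δ : Set Ω) : Set (Ω × Ω) := {p | p.1 = p.2 ∧ p.1 ∈ Δ}

/-- The number of points `γ` with `(p.1, γ) ∈ r` and `(γ, p.2) ∈ s`. -/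
noncomputable def interNum (r s : Set (Ω × Ω)) (p : Ω × Ω) : ℕ :=
  {γ : Ω | (p.1, γ) ∈ r ∧ (γ, p.2) ∈ s}.ncard

/-- A coherent configuration on `Ω`: a partition `S` of `Ω × Ω` such that the diagonal
is a union of classes, `S` is closed under transposition, and the intersection numbers
are well defined. -/
structure CoherentConfiguration (Ω : Type u) where
  S : Set (Set (Ω × Ω))
  isPartition : Setoid.IsPartition S
  diag_isRelation : ∃ T ⊆ S, ⋃₀ T = diagRel (Set.univ : Set Ω)
  swap_mem : ∀ s ∈ S, {p : Ω × Ω | (p.2, p.1) ∈ s} ∈ S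
  coherent : ∀ r ∈ S, ∀ s ∈ S, ∀ t ∈ S, ∀ p ∈ t, ∀ q ∈ t,
    interNum r s p = interNum r s q

namespace CoherentConfiguration

/-- A relation of `X` is a union of basis relations of `X`. -/
def IsRelation (X : CoherentConfiguration Ω) (r : Set (Ω × Ω)) : Prop :=
  ∃ T ⊆ X.S, ⋃₀ T = r

/-- A fiber of `X` is a set `Δ` with `1_Δ` a basis relation. -/
def IsFiber (X : CoherentConfiguration Ω) (Δ : Set Ω) : Prop :=
  diagRel Δ ∈ X.S

end CoherentConfiguration

/-- `X ≤ Y` iff every relation of `X` is a relation of `Y`. -/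
def CCle (X Y : CoherentConfiguration Ω) : Prop :=
  ∀ r, X.IsRelation r → Y.IsRelation r

/-- The arc set of a graph, as a set of ordered pairs. -/
def adjRel (G : SimpleGraph Ω) : Set (Ω × Ω) := {p | G.Adj p.1 p.2}

/-- `X = WL(G)`: the smallest coherent configuration having the arc set of `G`
among its relations. -/
def IsWL (G : SimpleGraph Ω) (X : CoherentConfiguration Ω) : Prop :=
  X.IsRelation (adjRel G) ∧
    ∀ Y : CoherentConfiguration Ω, Y.IsRelation (adjRel G) → CCle X Y

/-- `X = WL(G)_π`: the smallest coherent configuration having the arc set of `G`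
and every `1_Δ`, `Δ ∈ π`, among its relations. -/
def IsWLPart (G : SimpleGraph Ω) (π : Set (Set Ω)) (X : CoherentConfiguration Ω) : Prop :=
  X.IsRelation (adjRel G) ∧ (∀ Δ ∈ π, X.IsRelation (diagRel Δ)) ∧
    ∀ Y : CoherentConfiguration Ω, Y.IsRelation (adjRel G) →
      (∀ Δ ∈ π, Y.IsRelation (diagRel Δ)) → CCle X Y

/-- A graph is distance-hereditary if in every connected induced subgraph the distance
function is the same as in the graph itself. -/
def DistanceHereditary {V : Type*} (G : SimpleGraph V) : Prop :=
  ∀ s : Set V, (G.induce s).Connected →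
    ∀ u v : s, (G.induce s).dist u v = G.dist u.1 v.1

/-- Two vertices are twins in a graph if every other vertex is adjacent to both
or to neither. -/
def IsTwin (G : SimpleGraph Ω) (a b : Ω) : Prop :=
  ∀ γ, γ ≠ a → γ ≠ b → (G.Adj γ a ↔ G.Adj γ b)

/-- Two points are `X`-twins if for every other point `γ`, the basis relation containing
`(γ, a)` coincides with the one containing `(γ, b)`. -/
def XTwin (X : CoherentConfiguration Ω) (a b : Ω) : Prop :=
  ∀ γ, γ ≠ a → γ ≠ b → ∀ s ∈ X.S, ((γ, a) ∈ s ↔ (γ, b) ∈ s)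

/-- The relation `e_X` of being `X`-twins, as a set of pairs. -/
def twinRel (X : CoherentConfiguration Ω) : Set (Ω × Ω) := {p | XTwin X p.1 p.2}

/-- An equivalence relation on `Ω`, given as a set of pairs. -/
def IsEquivSet (e : Set (Ω × Ω)) : Prop :=
  (∀ a, (a, a) ∈ e) ∧ (∀ a b, (a, b) ∈ e → (b, a) ∈ e) ∧
    (∀ a b c, (a, b) ∈ e → (b, c) ∈ e → (a, c) ∈ e)

/-- A parabolic of `X` is an equivalence relation which is a relation of `X`. -/
def IsParabolic (X : CoherentConfiguration Ω) (e : Set (Ω × Ω)) : Prop :=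
  IsEquivSet e ∧ X.IsRelation e

/-- The dot product (composition) of two relations. -/
def relComp (r s : Set (Ω × Ω)) : Set (Ω × Ω) :=
  {p | ∃ c, (p.1, c) ∈ r ∧ (c, p.2) ∈ s}

/-- An algebraic isomorphism between coherent configurations: a bijection between the
sets of basis relations preserving the intersection numbers. -/
structure AlgIso {Ω : Type u} {Ω' : Type v} (X : CoherentConfiguration Ω)
    (X' : CoherentConfiguration Ω') where
  toFun : Set (Ω × Ω) → Set (Ω' × Ω')
  bijOn : Set.BijOn toFun X.S X'.S
  card_eq : ∀ r ∈ X.S, ∀ s ∈ X.S, ∀ t ∈ X.S, ∀ p ∈ t, ∀ p' ∈ toFun t,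
      interNum r s p = interNum (toFun r) (toFun s) p'

/-- `X` is separable: every algebraic isomorphism from `X` to another coherent
configuration is induced by a bijection of the point sets. -/
def CCSeparable {Ω : Type u} (X : CoherentConfiguration Ω) : Prop :=
  ∀ (Ω' : Type u), Finite Ω' → ∀ (X' : CoherentConfiguration Ω') (φ : AlgIso X X'),
    ∃ f : Ω → Ω', Function.Bijective f ∧ ∀ s ∈ X.S, φ.toFun s = Prod.map f f '' s

/-- `Ω₋(m)`. -/
def OmegaMinus (m : Set (Ω × Ω)) : Set Ω := {a | ∃ b, (a, b) ∈ m}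

/-- `Ω₊(m)`. -/
def OmegaPlus (m : Set (Ω × Ω)) : Set Ω := {b | ∃ a, (a, b) ∈ m}

/-- A matching of `X`: an irreflexive basis relation of valency one in both directions. -/
def IsMatchingCC (X : CoherentConfiguration Ω) (m : Set (Ω × Ω)) : Prop :=
  m ∈ X.S ∧ (∀ p ∈ m, p.1 ≠ p.2) ∧
    (∀ a b c, (a, b) ∈ m → (a, c) ∈ m → b = c) ∧
    (∀ a b c, (a, c) ∈ m → (b, c) ∈ m → a = b)

/-- A pendant matching of `X` with respect to the graph `G`. -/
def IsPendantMatching (G : SimpleGraph Ω) (X : CoherentConfiguration Ω)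
    (m : Set (Ω × Ω)) : Prop :=
  IsMatchingCC X m ∧ OmegaMinus m ≠ OmegaPlus m ∧
    ∀ p ∈ m, G.Adj p.1 p.2 ∧ ∀ c, G.Adj p.1 c → c = p.2

/-- A twin matching of `X` with respect to the graph `G`. -/
def IsTwinMatching (G : SimpleGraph Ω) (X : CoherentConfiguration Ω)
    (m : Set (Ω × Ω)) : Prop :=
  IsMatchingCC X m ∧ OmegaMinus m ≠ OmegaPlus m ∧ ∀ p ∈ m, IsTwin G p.1 p.2

/-- The quotient graph of `G` modulo a (twin) equivalence relation `r`: two distinct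
classes are adjacent iff every vertex of one is adjacent to every vertex of the other. -/
def quotGraph (G : SimpleGraph Ω) (r : Ω → Ω → Prop) : SimpleGraph (Quot r) where
  Adj c d := c ≠ d ∧ ∀ a b : Ω, Quot.mk r a = c → Quot.mk r b = d → G.Adj a b
  symm := ⟨fun _ _ h => ⟨h.1.symm, fun a b ha hb => (h.2 b a hb ha).symm⟩⟩
  loopless := ⟨fun _ h => h.1 rfl⟩

/-- The restriction of a relation on `Ω` to the complement of `Δ`. -/
def restrictRel (Δ : Set Ω) (s : Set (Ω × Ω)) : Set (↥(Δᶜ) × ↥(Δᶜ)) :=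
  {p | ((p.1 : Ω), (p.2 : Ω)) ∈ s}

/-- The restriction of a subset of `Ω` to the complement of `Δ`. -/
def restrictSet (Δ Γ : Set Ω) : Set ↥(Δᶜ) := {x | (x : Ω) ∈ Γ}

section Relations

variable {A B : Type*}

def swapRel (s : Set (A × A)) : Set (A × A) := {p | (p.2, p.1) ∈ s}

lemma mem_swapRel {s : Set (A × A)} {p : A × A} : p ∈ swapRel s ↔ (p.2, p.1) ∈ s :=
  Iff.rfl

lemma OmegaMinus_swapRel (s : Set (A × A)) : OmegaMinus (swapRel s) = OmegaPlus s := rfl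

lemma image_swapRel (f : A → B) (s : Set (A × A)) :
    Prod.map f f '' swapRel s = swapRel (Prod.map f f '' s) := by
  ext ⟨x, y⟩
  simp only [mem_image, mem_swapRel, Prod.exists, Prod.map, Prod.mk.injEq]
  constructor
  · rintro ⟨a, b, hab, rfl, rfl⟩; exact ⟨b, a, hab, rfl, rfl⟩
  · rintro ⟨a, b, hab, rfl, rfl⟩; exact ⟨b, a, hab, rfl, rfl⟩

lemma image_relComp {f : A → B} (hf : Function.Injective f) (r s : Set (A × A)) :
    Prod.map f f '' relComp r s = relComp (Prod.map f f '' r) (Prod.map f f '' s) := by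
  ext ⟨x, y⟩
  constructor
  · rintro ⟨⟨a, b⟩, ⟨c, hac, hcb⟩, h⟩
    obtain ⟨rfl, rfl⟩ := Prod.mk.inj h
    exact ⟨f c, ⟨_, hac, rfl⟩, ⟨_, hcb, rfl⟩⟩
  · rintro ⟨c, ⟨⟨a, c₁⟩, h₁, e₁⟩, ⟨⟨c₂, b⟩, h₂, e₂⟩⟩
    obtain ⟨rfl, rfl⟩ := Prod.mk.inj e₁
    obtain ⟨hc, rfl⟩ := Prod.mk.inj e₂
    exact ⟨(a, b), ⟨c₁, h₁, hf hc ▸ h₂⟩, rfl⟩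

lemma relComp_relComp_swapRel {μ s : Set (A × A)}
    (hμ : Relator.LeftUnique fun a b => (a, b) ∈ μ) (hs : ∀ p ∈ s, p.1 ∈ OmegaMinus μ) :
    relComp μ (relComp (swapRel μ) s) = s := by
  ext ⟨a, b⟩
  constructor
  · rintro ⟨c, hac, d, hdc, hdb⟩
    obtain rfl : d = a := hμ hdc hac
    exact hdb
  · intro hab
    obtain ⟨c, hac⟩ := hs _ hab
    exact ⟨c, hac, a, hac, hab⟩

lemma interNum_pos_iff [Finite A] {r s : Set (A × A)} {p : A × A} :
    0 < interNum r s p ↔ p ∈ relComp r s :=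
  Set.ncard_pos

lemma interNum_image {f : A → B} (hf : Function.Injective f) (r s : Set (A × A)) (a b : A) :
    interNum (Prod.map f f '' r) (Prod.map f f '' s) (f a, f b) = interNum r s (a, b) := by
  have : {γ | (f a, γ) ∈ Prod.map f f '' r ∧ (γ, f b) ∈ Prod.map f f '' s} =
      f '' {γ | (a, γ) ∈ r ∧ (γ, b) ∈ s} := by
    ext γ
    simp only [mem_ofPred_eq, mem_image, Prod.exists, Prod.map, Prod.mk.injEq]
    constructor
    · rintro ⟨⟨a', c, h₁, ha, rfl⟩, ⟨c', b', h₂, hc, hb⟩⟩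
      obtain rfl := hf ha
      obtain rfl := hf hb
      obtain rfl := hf hc
      exact ⟨c', ⟨h₁, h₂⟩, rfl⟩
    · rintro ⟨c, ⟨h₁, h₂⟩, rfl⟩
      exact ⟨⟨a, c, h₁, rfl, rfl⟩, ⟨c, b, h₂, rfl, rfl⟩⟩
  rw [interNum, interNum, this, Set.ncard_image_of_injective _ hf]

lemma diagRel_injective : Function.Injective (diagRel : Set A → Set (A × A)) := by
  intro D E h
  ext a
  have := congrArg (fun r => (a, a) ∈ r) h
  simpa [diagRel] using this

lemma diagRel_subset_univ (D : Set A) : diagRel D ⊆ diagRel univ :=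
  fun _ hp => ⟨hp.1, trivial⟩

lemma eq_diagRel_of_subset {e : Set (A × A)} (he : e ⊆ diagRel univ) :
    e = diagRel {a | (a, a) ∈ e} := by
  ext ⟨a, b⟩
  constructor
  · intro h
    obtain rfl : a = b := (he h).1
    exact ⟨rfl, h⟩
  · rintro ⟨h, hmem⟩
    obtain rfl : a = b := h
    exact hmem

end Relations

namespace CoherentConfiguration

section Basic

variable {A : Type*} (Z : CoherentConfiguration A)

lemma ext_of_S_eq {Z' : CoherentConfiguration A} (h : Z.S = Z'.S) : Z = Z' := by
  cases Z; cases Z'; cases h; rfl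

lemma nonempty_of_mem {s : Set (A × A)} (hs : s ∈ Z.S) : s.Nonempty :=
  nonempty_iff_ne_empty.mpr fun h => Z.isPartition.1 (h ▸ hs)

lemma eq_of_mem_of_mem {s t : Set (A × A)} {p : A × A} (hs : s ∈ Z.S) (ht : t ∈ Z.S)
    (hps : p ∈ s) (hpt : p ∈ t) : s = t :=
  (Z.isPartition.2 p).unique ⟨hs, hps⟩ ⟨ht, hpt⟩

noncomputable def classOf (p : A × A) : Set (A × A) :=
  (Z.isPartition.2 p).exists.choose

lemma classOf_mem (p : A × A) : Z.classOf p ∈ Z.S :=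
  (Z.isPartition.2 p).exists.choose_spec.1

lemma mem_classOf (p : A × A) : p ∈ Z.classOf p :=
  (Z.isPartition.2 p).exists.choose_spec.2

lemma classOf_eq {s : Set (A × A)} {p : A × A} (hs : s ∈ Z.S) (hp : p ∈ s) :
    Z.classOf p = s :=
  Z.eq_of_mem_of_mem (Z.classOf_mem p) hs (Z.mem_classOf p) hp

lemma subset_diagRel_of_mem {e : Set (A × A)} (he : e ∈ Z.S) {a : A} (ha : (a, a) ∈ e) :
    e ⊆ diagRel univ := by
  obtain ⟨T, hTS, hT⟩ := Z.diag_isRelation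
  obtain ⟨t, htT, hat⟩ : (a, a) ∈ ⋃₀ T := hT ▸ ⟨rfl, trivial⟩
  rw [Z.eq_of_mem_of_mem he (hTS htT) ha hat, ← hT]
  exact subset_sUnion_of_mem htT

lemma disjoint_of_diagRel_mem {D E : Set A} (hD : diagRel D ∈ Z.S) (hE : diagRel E ∈ Z.S)
    (hDE : D ≠ E) : Disjoint D E :=
  disjoint_left.mpr fun a haD haE =>
    hDE (diagRel_injective (Z.eq_of_mem_of_mem (p := (a, a)) hD hE ⟨rfl, haD⟩ ⟨rfl, haE⟩))

lemma swapRel_mem {s : Set (A × A)} (hs : s ∈ Z.S) : swapRel s ∈ Z.S :=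
  Z.swap_mem s hs

lemma subset_diagRel_iff {e : Set (A × A)} (he : e ∈ Z.S) :
    e ⊆ diagRel univ ↔
      ∀ s ∈ Z.S, ∀ t ∈ Z.S, (t ∩ relComp s e).Nonempty → t = s := by
  constructor
  · rintro hd s hs t ht ⟨p, hpt, c, hc, hce⟩
    obtain rfl : c = p.2 := (hd hce).1
    exact Z.eq_of_mem_of_mem ht hs hpt hc
  · intro h
    obtain ⟨⟨b, c⟩, hbc⟩ := Z.nonempty_of_mem he
    rw [h _ (Z.classOf_mem (b, b)) e he ⟨(b, c), hbc, b, Z.mem_classOf _, hbc⟩]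
    exact Z.subset_diagRel_of_mem (Z.classOf_mem _) (Z.mem_classOf _)

variable [Finite A]

lemma forall_fst_mem_or_forall_fst_not_mem {D : Set A} (hD : diagRel D ∈ Z.S)
    {s : Set (A × A)} (hs : s ∈ Z.S) : (∀ p ∈ s, p.1 ∈ D) ∨ ∀ p ∈ s, p.1 ∉ D := by
  by_cases h : ∃ p ∈ s, p.1 ∈ D
  swap
  · exact Or.inr fun p hp hpD => h ⟨p, hp, hpD⟩
  obtain ⟨p₀, hp₀, hp₀D⟩ := h
  refine Or.inl fun p hp => ?_
  have hpos : 0 < interNum (diagRel D) s p₀ := interNum_pos_iff.mpr ⟨p₀.1, ⟨rfl, hp₀D⟩, hp₀⟩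
  rw [Z.coherent _ hD _ hs _ hs _ hp₀ _ hp] at hpos
  obtain ⟨c, ⟨hc, hcD⟩, -⟩ := interNum_pos_iff.mp hpos
  exact hcD

lemma forall_snd_mem_or_forall_snd_not_mem {D : Set A} (hD : diagRel D ∈ Z.S)
    {s : Set (A × A)} (hs : s ∈ Z.S) : (∀ p ∈ s, p.2 ∈ D) ∨ ∀ p ∈ s, p.2 ∉ D :=
  (Z.forall_fst_mem_or_forall_fst_not_mem hD (Z.swapRel_mem hs)).imp
    (fun h p hp => h (p.2, p.1) hp) fun h p hp => h (p.2, p.1) hp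

lemma diagRel_OmegaMinus_mem {s : Set (A × A)} (hs : s ∈ Z.S) :
    diagRel (OmegaMinus s) ∈ Z.S := by
  obtain ⟨⟨a₀, b₀⟩, hab₀⟩ := Z.nonempty_of_mem hs
  set e := Z.classOf (a₀, a₀)
  have he : e = diagRel {a | (a, a) ∈ e} :=
    eq_diagRel_of_subset (Z.subset_diagRel_of_mem (Z.classOf_mem _) (Z.mem_classOf _))
  suffices OmegaMinus s = {a | (a, a) ∈ e} by rw [this, ← he]; exact Z.classOf_mem _
  ext a
  constructor
  · rintro ⟨b, hab⟩
    have hfib : diagRel {a | (a, a) ∈ e} ∈ Z.S := he ▸ Z.classOf_mem _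
    refine (Z.forall_fst_mem_or_forall_fst_not_mem hfib hs).elim (fun h => h _ hab)
      fun h => absurd (Z.mem_classOf _) (h _ hab₀)
  · intro ha
    have hpos : 0 < interNum s (swapRel s) (a₀, a₀) :=
      interNum_pos_iff.mpr ⟨b₀, hab₀, hab₀⟩
    rw [Z.coherent _ hs _ (Z.swapRel_mem hs) _ (Z.classOf_mem _) _ (Z.mem_classOf _) (a, a) ha]
      at hpos
    obtain ⟨b, hab, -⟩ := interNum_pos_iff.mp hpos
    exact ⟨b, hab⟩

lemma diagRel_OmegaPlus_mem {s : Set (A × A)} (hs : s ∈ Z.S) :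
    diagRel (OmegaPlus s) ∈ Z.S :=
  Z.diagRel_OmegaMinus_mem (Z.swapRel_mem hs)

lemma relComp_mem {μ s : Set (A × A)} (hμ : μ ∈ Z.S)
    (hμu : Relator.LeftUnique fun a b => (a, b) ∈ μ) (hs : s ∈ Z.S)
    (hsrc : ∀ p ∈ s, p.1 ∈ OmegaPlus μ) : relComp μ s ∈ Z.S := by
  obtain ⟨⟨c₀, b₀⟩, hcb₀⟩ := Z.nonempty_of_mem hs
  obtain ⟨a₀, hac₀⟩ := hsrc _ hcb₀
  set t := Z.classOf (a₀, b₀)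
  have hsub : ∀ {r : Set (A × A)} {u : Set (A × A)} {p : A × A}, r ∈ Z.S → u ∈ Z.S →
      ∀ {w : Set (A × A)}, w ∈ Z.S → p ∈ w → p ∈ relComp r u → w ⊆ relComp r u := by
    intro r u p hr hu w hw hpw hp q hq
    rw [← interNum_pos_iff] at hp ⊢
    rwa [Z.coherent _ hr _ hu _ hw _ hq _ hpw]
  have htsub : t ⊆ relComp μ s :=
    hsub hμ hs (Z.classOf_mem _) (Z.mem_classOf _) ⟨c₀, hac₀, hcb₀⟩
  have hst : s ⊆ relComp (swapRel μ) t := by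
    obtain ⟨c, hac, hcb⟩ := htsub (Z.mem_classOf (a₀, b₀))
    exact hsub (Z.swapRel_mem hμ) (Z.classOf_mem _) hs hcb ⟨a₀, hac, Z.mem_classOf _⟩
  suffices relComp μ s = t from this ▸ Z.classOf_mem _
  refine subset_antisymm ?_ htsub
  rintro ⟨a, b⟩ ⟨c, hac, hcb⟩
  obtain ⟨a', hca', ha'b⟩ := hst hcb
  obtain rfl : a' = a := hμu hca' hac
  exact ha'b

lemma forall_fst_mem_iff {D : Set A} (hD : diagRel D ∈ Z.S) {s : Set (A × A)}
    (hs : s ∈ Z.S) : (∀ p ∈ s, p.1 ∈ D) ↔ (s ∩ relComp (diagRel D) s).Nonempty := by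
  constructor
  · intro h
    obtain ⟨p, hp⟩ := Z.nonempty_of_mem hs
    exact ⟨p, hp, p.1, ⟨rfl, h p hp⟩, hp⟩
  · rintro ⟨p, hp, c, ⟨hc, hcD⟩, -⟩
    refine (Z.forall_fst_mem_or_forall_fst_not_mem hD hs).resolve_right fun h => ?_
    exact h p hp (hc ▸ hcD)

lemma forall_fst_not_mem_iff {D : Set A} (hD : diagRel D ∈ Z.S) {s : Set (A × A)}
    (hs : s ∈ Z.S) : (∀ p ∈ s, p.1 ∉ D) ↔ ¬∀ p ∈ s, p.1 ∈ D := by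
  obtain ⟨p, hp⟩ := Z.nonempty_of_mem hs
  refine ⟨fun h h' => h p hp (h' p hp), fun h => ?_⟩
  exact (Z.forall_fst_mem_or_forall_fst_not_mem hD hs).resolve_left h

end Basic

end CoherentConfiguration

/-! ### Algebraic isomorphisms -/

namespace AlgIso

variable {A B C : Type*} {Z : CoherentConfiguration A} {Z' : CoherentConfiguration B}
  (φ : AlgIso Z Z')

lemma mapsTo {s : Set (A × A)} (hs : s ∈ Z.S) : φ.toFun s ∈ Z'.S :=
  φ.bijOn.1 hs

lemma injective {s t : Set (A × A)} (hs : s ∈ Z.S) (ht : t ∈ Z.S)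
    (h : φ.toFun s = φ.toFun t) : s = t :=
  φ.bijOn.2.1 hs ht h

lemma exists_eq {s' : Set (B × B)} (hs' : s' ∈ Z'.S) : ∃ s ∈ Z.S, φ.toFun s = s' :=
  φ.bijOn.2.2 hs'

def trans {Z'' : CoherentConfiguration C} (ψ : AlgIso Z' Z'') : AlgIso Z Z'' where
  toFun := ψ.toFun ∘ φ.toFun
  bijOn := ψ.bijOn.comp φ.bijOn
  card_eq r hr s hs t ht p hp p'' hp'' := by
    obtain ⟨p', hp'⟩ := Z'.nonempty_of_mem (φ.mapsTo ht)
    rw [φ.card_eq r hr s hs t ht p hp p' hp']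
    exact ψ.card_eq _ (φ.mapsTo hr) _ (φ.mapsTo hs) _ (φ.mapsTo ht) p' hp' p'' hp''

def ofImage (h : A → B) (hh : Function.Injective h)
    (hbij : BijOn (fun s => Prod.map h h '' s) Z.S Z'.S) : AlgIso Z Z' where
  toFun s := Prod.map h h '' s
  bijOn := hbij
  card_eq r _ s _ t ht p hp := by
    rintro _ ⟨⟨a, b⟩, hab, rfl⟩
    rw [Prod.map_apply, interNum_image hh]
    exact Z.coherent r ‹_› s ‹_› t ht p hp _ hab

variable [Finite A] [Finite B]

lemma inter_relComp_nonempty_iff {r s t : Set (A × A)} (hr : r ∈ Z.S) (hs : s ∈ Z.S)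
    (ht : t ∈ Z.S) :
    (t ∩ relComp r s).Nonempty ↔ (φ.toFun t ∩ relComp (φ.toFun r) (φ.toFun s)).Nonempty := by
  constructor
  · rintro ⟨p, hp, hrs⟩
    obtain ⟨p', hp'⟩ := Z'.nonempty_of_mem (φ.mapsTo ht)
    refine ⟨p', hp', interNum_pos_iff.mp ?_⟩
    rw [← φ.card_eq r hr s hs t ht p hp p' hp']
    exact interNum_pos_iff.mpr hrs
  · rintro ⟨p', hp', hrs⟩
    obtain ⟨p, hp⟩ := Z.nonempty_of_mem ht
    refine ⟨p, hp, interNum_pos_iff.mp ?_⟩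
    rw [φ.card_eq r hr s hs t ht p hp p' hp']
    exact interNum_pos_iff.mpr hrs

lemma subset_diagRel {e : Set (A × A)} (he : e ∈ Z.S) (hd : e ⊆ diagRel univ) :
    φ.toFun e ⊆ diagRel univ := by
  rw [Z'.subset_diagRel_iff (φ.mapsTo he)]
  intro s' hs' t' ht' hne
  obtain ⟨s, hs, rfl⟩ := φ.exists_eq hs'
  obtain ⟨t, ht, rfl⟩ := φ.exists_eq ht'
  rw [(Z.subset_diagRel_iff he).mp hd s hs t ht
    ((φ.inter_relComp_nonempty_iff hs he ht).mpr hne)]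

lemma map_swapRel {s : Set (A × A)} (hs : s ∈ Z.S) :
    φ.toFun (swapRel s) = swapRel (φ.toFun s) := by
  obtain ⟨⟨a, b⟩, hab⟩ := Z.nonempty_of_mem hs
  have he := Z.classOf_mem (a, a)
  obtain ⟨p', hp', c, hc, hc'⟩ := (φ.inter_relComp_nonempty_iff hs (Z.swapRel_mem hs) he).mp
    ⟨(a, a), Z.mem_classOf _, b, hab, hab⟩
  obtain ⟨a', b'⟩ := p'
  obtain rfl : a' = b' :=
    (φ.subset_diagRel he (Z.subset_diagRel_of_mem he (Z.mem_classOf _)) hp').1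
  exact Z'.eq_of_mem_of_mem (φ.mapsTo (Z.swapRel_mem hs)) (Z'.swapRel_mem (φ.mapsTo hs)) hc' hc

lemma forall_fst_mem_iff {D : Set A} {D' : Set B} (hD : diagRel D ∈ Z.S)
    (hD' : φ.toFun (diagRel D) = diagRel D') {s : Set (A × A)} (hs : s ∈ Z.S) :
    (∀ p ∈ s, p.1 ∈ D) ↔ ∀ p' ∈ φ.toFun s, p'.1 ∈ D' := by
  rw [Z.forall_fst_mem_iff hD hs, Z'.forall_fst_mem_iff (hD' ▸ φ.mapsTo hD) (φ.mapsTo hs), ← hD']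
  exact φ.inter_relComp_nonempty_iff hD hs hs

lemma forall_snd_mem_iff {D : Set A} {D' : Set B} (hD : diagRel D ∈ Z.S)
    (hD' : φ.toFun (diagRel D) = diagRel D') {s : Set (A × A)} (hs : s ∈ Z.S) :
    (∀ p ∈ s, p.2 ∈ D) ↔ ∀ p' ∈ φ.toFun s, p'.2 ∈ D' := by
  have h := φ.forall_fst_mem_iff hD hD' (Z.swapRel_mem hs)
  rw [φ.map_swapRel hs] at h
  exact ⟨fun hs' p' hp' => h.mp (fun p hp => hs' _ hp) (p'.2, p'.1) hp',
    fun hs' p hp => h.mpr (fun p' hp' => hs' _ hp') (p.2, p.1) hp⟩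

lemma forall_fst_not_mem_iff {D : Set A} {D' : Set B} (hD : diagRel D ∈ Z.S)
    (hD' : φ.toFun (diagRel D) = diagRel D') {s : Set (A × A)} (hs : s ∈ Z.S) :
    (∀ p ∈ s, p.1 ∉ D) ↔ ∀ p' ∈ φ.toFun s, p'.1 ∉ D' := by
  rw [Z.forall_fst_not_mem_iff hD hs,
    Z'.forall_fst_not_mem_iff (hD' ▸ φ.mapsTo hD) (φ.mapsTo hs), φ.forall_fst_mem_iff hD hD' hs]

lemma forall_snd_not_mem_iff {D : Set A} {D' : Set B} (hD : diagRel D ∈ Z.S)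
    (hD' : φ.toFun (diagRel D) = diagRel D') {s : Set (A × A)} (hs : s ∈ Z.S) :
    (∀ p ∈ s, p.2 ∉ D) ↔ ∀ p' ∈ φ.toFun s, p'.2 ∉ D' := by
  have h := φ.forall_fst_not_mem_iff hD hD' (Z.swapRel_mem hs)
  rw [φ.map_swapRel hs] at h
  exact ⟨fun hs' p' hp' => h.mp (fun p hp => hs' _ hp) (p'.2, p'.1) hp',
    fun hs' p hp => h.mpr (fun p' hp' => hs' _ hp') (p.2, p.1) hp⟩

lemma map_diagRel_OmegaMinus {μ : Set (A × A)} (hμ : μ ∈ Z.S) :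
    φ.toFun (diagRel (OmegaMinus μ)) = diagRel (OmegaMinus (φ.toFun μ)) := by
  have hΔ := Z.diagRel_OmegaMinus_mem hμ
  set E := {a | (a, a) ∈ φ.toFun (diagRel (OmegaMinus μ))}
  have hE : φ.toFun (diagRel (OmegaMinus μ)) = diagRel E :=
    eq_diagRel_of_subset (φ.subset_diagRel hΔ (diagRel_subset_univ _))
  have hsrc : ∀ p' ∈ φ.toFun μ, p'.1 ∈ E :=
    (φ.forall_fst_mem_iff hΔ hE hμ).mp fun p hp => ⟨p.2, hp⟩
  rw [hE]
  by_contra hne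
  obtain ⟨p', hp'⟩ := Z'.nonempty_of_mem (φ.mapsTo hμ)
  exact disjoint_left.mp (Z'.disjoint_of_diagRel_mem (hE ▸ φ.mapsTo hΔ)
    (Z'.diagRel_OmegaMinus_mem (φ.mapsTo hμ)) fun h => hne (congrArg diagRel h))
    (hsrc p' hp') ⟨p'.2, hp'⟩

lemma map_diagRel_OmegaPlus {μ : Set (A × A)} (hμ : μ ∈ Z.S) :
    φ.toFun (diagRel (OmegaPlus μ)) = diagRel (OmegaPlus (φ.toFun μ)) := by
  have := φ.map_diagRel_OmegaMinus (Z.swapRel_mem hμ)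
  rwa [OmegaMinus_swapRel, φ.map_swapRel hμ, OmegaMinus_swapRel] at this

lemma rightUnique {μ : Set (A × A)} (hμ : μ ∈ Z.S)
    (hμu : Relator.RightUnique fun a b => (a, b) ∈ μ) :
    Relator.RightUnique fun a b => (a, b) ∈ φ.toFun μ := by
  intro a b c hab hac
  have hΔ := Z.diagRel_OmegaMinus_mem hμ
  have ha : (a, a) ∈ φ.toFun (diagRel (OmegaMinus μ)) := by
    rw [φ.map_diagRel_OmegaMinus hμ]; exact ⟨rfl, b, hab⟩
  obtain ⟨⟨a₀, b₀⟩, hab₀⟩ := Z.nonempty_of_mem hμ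
  have hone : interNum μ (swapRel μ) (a₀, a₀) = 1 := by
    rw [interNum, ncard_eq_one]
    exact ⟨b₀, eq_singleton_iff_unique_mem.mpr ⟨⟨hab₀, hab₀⟩, fun c hc => hμu hc.1 hab₀⟩⟩
  rw [φ.card_eq _ hμ _ (Z.swapRel_mem hμ) _ hΔ _ ⟨rfl, b₀, hab₀⟩ _ ha, φ.map_swapRel hμ,
    interNum, ncard_eq_one] at hone
  obtain ⟨d, hd⟩ := hone
  have hb : b ∈ ({d} : Set B) := hd ▸ ⟨hab, hab⟩
  have hc : c ∈ ({d} : Set B) := hd ▸ ⟨hac, hac⟩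
  exact hb.trans hc.symm

lemma leftUnique {μ : Set (A × A)} (hμ : μ ∈ Z.S)
    (hμu : Relator.LeftUnique fun a b => (a, b) ∈ μ) :
    Relator.LeftUnique fun a b => (a, b) ∈ φ.toFun μ := by
  have := φ.rightUnique (Z.swapRel_mem hμ) fun _ _ _ h₁ h₂ => hμu h₁ h₂
  rw [φ.map_swapRel hμ] at this
  exact fun _ _ _ hac hbc => this hac hbc

lemma map_relComp {μ s : Set (A × A)} (hμ : μ ∈ Z.S)
    (hμu : Relator.LeftUnique fun a b => (a, b) ∈ μ) (hs : s ∈ Z.S)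
    (hsrc : ∀ p ∈ s, p.1 ∈ OmegaPlus μ) :
    φ.toFun (relComp μ s) = relComp (φ.toFun μ) (φ.toFun s) := by
  have hμs := Z.relComp_mem hμ hμu hs hsrc
  have hsrc' : ∀ p' ∈ φ.toFun s, p'.1 ∈ OmegaPlus (φ.toFun μ) :=
    (φ.forall_fst_mem_iff (Z.diagRel_OmegaPlus_mem hμ) (φ.map_diagRel_OmegaPlus hμ) hs).mp hsrc
  obtain ⟨p, hp⟩ := Z.nonempty_of_mem hμs
  obtain ⟨p', hp', hp'μs⟩ := (φ.inter_relComp_nonempty_iff hμ hs hμs).mp ⟨p, hp, hp⟩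
  exact Z'.eq_of_mem_of_mem (φ.mapsTo hμs)
    (Z'.relComp_mem (φ.mapsTo hμ) (φ.leftUnique hμ hμu) (φ.mapsTo hs) hsrc') hp' hp'μs

end AlgIso

/-! ### Restriction to the complement of a fiber -/

section Restriction

variable {A : Type*}

lemma mem_restrictRel {D : Set A} {s : Set (A × A)} {p : ↥(Dᶜ) × ↥(Dᶜ)} :
    p ∈ restrictRel D s ↔ ((p.1 : A), (p.2 : A)) ∈ s :=
  Iff.rfl

lemma interNum_restrictRel_of_forall_snd_not_mem {D : Set A} {r s : Set (A × A)}
    (h : ∀ q ∈ r, q.2 ∉ D) (p : ↥(Dᶜ) × ↥(Dᶜ)) :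
    interNum (restrictRel D r) (restrictRel D s) p = interNum r s ((p.1 : A), (p.2 : A)) := by
  have : {c : A | ((p.1 : A), c) ∈ r ∧ (c, (p.2 : A)) ∈ s} =
      Subtype.val '' {c : ↥(Dᶜ) | (p.1, c) ∈ restrictRel D r ∧ (c, p.2) ∈ restrictRel D s} := by
    ext c
    refine ⟨fun hc => ⟨⟨c, h _ hc.1⟩, hc, rfl⟩, ?_⟩
    rintro ⟨c, hc, rfl⟩
    exact hc
  rw [interNum, interNum, this, ncard_image_of_injective _ Subtype.val_injective]

lemma interNum_restrictRel_of_forall_snd_mem {D : Set A} {r s : Set (A × A)}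
    (h : ∀ q ∈ r, q.2 ∈ D) (p : ↥(Dᶜ) × ↥(Dᶜ)) :
    interNum (restrictRel D r) (restrictRel D s) p = 0 := by
  have : {c : ↥(Dᶜ) | (p.1, c) ∈ restrictRel D r ∧ (c, p.2) ∈ restrictRel D s} = ∅ :=
    eq_empty_of_forall_notMem fun c hc => c.2 (h _ hc.1)
  rw [interNum, this, ncard_empty]

lemma restrictRel_diagRel (D E : Set A) :
    restrictRel D (diagRel E) = diagRel (restrictSet D E) := by
  ext ⟨x, y⟩
  exact ⟨fun ⟨h₁, h₂⟩ => ⟨Subtype.val_injective h₁, h₂⟩,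
    fun ⟨h₁, h₂⟩ => ⟨congrArg Subtype.val h₁, h₂⟩⟩

end Restriction

namespace CoherentConfiguration

variable {A : Type*} [Finite A] (Z : CoherentConfiguration A)

lemma restrictRel_nonempty_iff {D : Set A} (hD : diagRel D ∈ Z.S) {s : Set (A × A)}
    (hs : s ∈ Z.S) :
    (restrictRel D s).Nonempty ↔ (∀ p ∈ s, p.1 ∉ D) ∧ ∀ p ∈ s, p.2 ∉ D := by
  constructor
  · rintro ⟨q, hq⟩
    exact ⟨(Z.forall_fst_mem_or_forall_fst_not_mem hD hs).resolve_left fun h => q.1.2 (h _ hq),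
      (Z.forall_snd_mem_or_forall_snd_not_mem hD hs).resolve_left fun h => q.2.2 (h _ hq)⟩
  · rintro ⟨h₁, h₂⟩
    obtain ⟨p, hp⟩ := Z.nonempty_of_mem hs
    exact ⟨(⟨p.1, h₁ p hp⟩, ⟨p.2, h₂ p hp⟩), hp⟩

/-- `Z ∖ D` for a fiber `D`. -/
def restrict (D : Set A) (hD : diagRel D ∈ Z.S) : CoherentConfiguration ↥(Dᶜ) where
  S := {t | t.Nonempty ∧ ∃ s ∈ Z.S, t = restrictRel D s}
  isPartition := by
    refine ⟨fun h => h.1.ne_empty rfl, fun p => ?_⟩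
    refine ⟨restrictRel D (Z.classOf ((p.1 : A), (p.2 : A))),
      ⟨⟨⟨p, Z.mem_classOf _⟩, _, Z.classOf_mem _, rfl⟩, Z.mem_classOf _⟩, ?_⟩
    rintro _ ⟨⟨-, s, hs, rfl⟩, hp⟩
    rw [Z.classOf_eq hs hp]
  diag_isRelation := by
    refine ⟨{t | t.Nonempty ∧ ∃ e ∈ Z.S, e ⊆ diagRel univ ∧ t = restrictRel D e},
      fun t ⟨hne, e, he, _, ht⟩ => ⟨hne, e, he, ht⟩, ?_⟩
    ext ⟨x, y⟩
    constructor
    · rintro ⟨_, ⟨-, e, he, hed, rfl⟩, hxy⟩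
      exact ⟨Subtype.val_injective (hed hxy).1, trivial⟩
    · rintro ⟨h, -⟩
      obtain rfl : x = y := h
      exact ⟨_, ⟨⟨(x, x), Z.mem_classOf _⟩, _, Z.classOf_mem _,
        Z.subset_diagRel_of_mem (Z.classOf_mem _) (Z.mem_classOf _), rfl⟩, Z.mem_classOf _⟩
  swap_mem := by
    rintro _ ⟨⟨q, hq⟩, s, hs, rfl⟩
    exact ⟨⟨(q.2, q.1), hq⟩, swapRel s, Z.swapRel_mem hs, rfl⟩
  coherent := by
    rintro _ ⟨-, r, hr, rfl⟩ _ ⟨-, s, hs, rfl⟩ _ ⟨-, t, ht, rfl⟩ p hp q hq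
    rcases Z.forall_snd_mem_or_forall_snd_not_mem hD hr with h | h
    · rw [interNum_restrictRel_of_forall_snd_mem h, interNum_restrictRel_of_forall_snd_mem h]
    · rw [interNum_restrictRel_of_forall_snd_not_mem h,
        interNum_restrictRel_of_forall_snd_not_mem h]
      exact Z.coherent r hr s hs t ht _ hp _ hq

lemma mem_restrict_S {D : Set A} {hD : diagRel D ∈ Z.S} {s : Set (A × A)} (hs : s ∈ Z.S)
    (h₁ : ∀ p ∈ s, p.1 ∉ D) (h₂ : ∀ p ∈ s, p.2 ∉ D) : restrictRel D s ∈ (Z.restrict D hD).S :=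
  ⟨(Z.restrictRel_nonempty_iff hD hs).mpr ⟨h₁, h₂⟩, s, hs, rfl⟩

end CoherentConfiguration

namespace AlgIso

variable {A B : Type*} {Z : CoherentConfiguration A} {Z' : CoherentConfiguration B}
  (φ : AlgIso Z Z') {D : Set A} {D' : Set B}

noncomputable def restrictFun (D : Set A) (D' : Set B) (t : Set (↥(Dᶜ) × ↥(Dᶜ))) :
    Set (↥(D'ᶜ) × ↥(D'ᶜ)) :=
  restrictRel D' (φ.toFun (⋃ p ∈ t, Z.classOf ((p.1 : A), (p.2 : A))))

lemma restrictFun_restrictRel {s : Set (A × A)} (hs : s ∈ Z.S)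
    (hne : (restrictRel D s).Nonempty) :
    φ.restrictFun D D' (restrictRel D s) = restrictRel D' (φ.toFun s) := by
  obtain ⟨q, hq⟩ := hne
  have : ⋃ p ∈ restrictRel D s, Z.classOf ((p.1 : A), (p.2 : A)) = s := by
    refine subset_antisymm (iUnion₂_subset fun p hp => (Z.classOf_eq hs hp).le) fun x hx => ?_
    exact mem_biUnion hq ((Z.classOf_eq hs hq).symm ▸ hx)
  rw [restrictFun, this]

variable [Finite A] [Finite B]

lemma restrictRel_nonempty_iff (hD : diagRel D ∈ Z.S) (hD' : φ.toFun (diagRel D) = diagRel D')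
    {s : Set (A × A)} (hs : s ∈ Z.S) :
    (restrictRel D s).Nonempty ↔ (restrictRel D' (φ.toFun s)).Nonempty := by
  rw [Z.restrictRel_nonempty_iff hD hs,
    Z'.restrictRel_nonempty_iff (hD' ▸ φ.mapsTo hD) (φ.mapsTo hs),
    φ.forall_fst_not_mem_iff hD hD' hs, φ.forall_snd_not_mem_iff hD hD' hs]

noncomputable def restrict (hD : diagRel D ∈ Z.S) (hD' : φ.toFun (diagRel D) = diagRel D') :
    AlgIso (Z.restrict D hD) (Z'.restrict D' (hD' ▸ φ.mapsTo hD)) where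
  toFun := φ.restrictFun D D'
  bijOn := by
    refine ⟨?_, ?_, ?_⟩
    · rintro _ ⟨hne, s, hs, rfl⟩
      rw [φ.restrictFun_restrictRel hs hne]
      exact ⟨(φ.restrictRel_nonempty_iff hD hD' hs).mp hne, _, φ.mapsTo hs, rfl⟩
    · rintro _ ⟨hne₁, s₁, hs₁, rfl⟩ _ ⟨hne₂, s₂, hs₂, rfl⟩ h
      rw [φ.restrictFun_restrictRel hs₁ hne₁, φ.restrictFun_restrictRel hs₂ hne₂] at h
      obtain ⟨q, hq⟩ := (φ.restrictRel_nonempty_iff hD hD' hs₁).mp hne₁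
      rw [φ.injective hs₁ hs₂ (Z'.eq_of_mem_of_mem (φ.mapsTo hs₁) (φ.mapsTo hs₂) hq
        (mem_restrictRel.mp (h ▸ hq)))]
    · rintro _ ⟨hne', s', hs', rfl⟩
      obtain ⟨s, hs, rfl⟩ := φ.exists_eq hs'
      have hne := (φ.restrictRel_nonempty_iff hD hD' hs).mpr hne'
      exact ⟨_, ⟨hne, s, hs, rfl⟩, φ.restrictFun_restrictRel hs hne⟩
  card_eq := by
    rintro _ ⟨hrne, r, hr, rfl⟩ _ ⟨hsne, s, hs, rfl⟩ _ ⟨htne, t, ht, rfl⟩ p hp p' hp'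
    rw [φ.restrictFun_restrictRel hr hrne, φ.restrictFun_restrictRel hs hsne]
    rw [φ.restrictFun_restrictRel ht htne] at hp'
    have hr₂ := ((Z.restrictRel_nonempty_iff hD hr).mp hrne).2
    rw [interNum_restrictRel_of_forall_snd_not_mem hr₂,
      interNum_restrictRel_of_forall_snd_not_mem ((φ.forall_snd_not_mem_iff hD hD' hr).mp hr₂)]
    exact φ.card_eq r hr s hs t ht _ hp _ hp'

end AlgIso

/-! ### Duplication of a fiber -/

section Duplication

variable {C : Type*}

def dupProj (D : Set C) : C ⊕ ↥D → C := Sum.elim id Subtype.val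

/-- The copy of `t` on `C ⊕ D` whose pairs have their coordinates on the sides `σ`, `τ`,
`true` standing for the added copy of `D`. -/
def dupLift (D : Set C) (σ τ : Bool) (t : Set (C × C)) : Set ((C ⊕ ↥D) × (C ⊕ ↥D)) :=
  {p | p.1.isRight = σ ∧ p.2.isRight = τ ∧ (dupProj D p.1, dupProj D p.2) ∈ t}

lemma eq_of_dupProj_eq {D : Set C} {x y : C ⊕ ↥D} (hs : x.isRight = y.isRight)
    (h : dupProj D x = dupProj D y) : x = y := by
  cases x <;> cases y <;> simp_all [dupProj, Subtype.ext_iff]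

lemma swapRel_dupLift (D : Set C) (σ τ : Bool) (t : Set (C × C)) :
    swapRel (dupLift D σ τ t) = dupLift D τ σ (swapRel t) := by
  ext p
  exact ⟨fun ⟨h₁, h₂, h₃⟩ => ⟨h₂, h₁, h₃⟩, fun ⟨h₁, h₂, h₃⟩ => ⟨h₂, h₁, h₃⟩⟩

lemma relComp_dupLift_diagRel {D : Set C} {τ : Bool} {t : Set (C × C)} :
    relComp (dupLift D true false (diagRel D)) (dupLift D false τ t) = dupLift D true τ t := by
  ext ⟨x, y⟩
  constructor
  · rintro ⟨z, ⟨hx, hz, hxz, -⟩, -, hy, hzy⟩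
    refine ⟨hx, hy, ?_⟩
    show (dupProj D x, dupProj D y) ∈ t
    rw [show dupProj D x = dupProj D z from hxz]
    exact hzy
  · rintro ⟨hx, hy, hxy⟩
    refine ⟨Sum.inl (dupProj D x), ⟨hx, rfl, rfl, ?_⟩, rfl, hy, hxy⟩
    cases x with
    | inl _ => simp at hx
    | inr d => exact d.2

lemma interNum_dupLift (D : Set C) {σ₁ τ₁ σ₂ τ₂ : Bool} (a b : Set (C × C))
    (p : (C ⊕ ↥D) × (C ⊕ ↥D)) :
    interNum (dupLift D σ₁ τ₁ a) (dupLift D σ₂ τ₂ b) p =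
      if p.1.isRight = σ₁ ∧ p.2.isRight = τ₂ ∧ τ₁ = σ₂ then
        {c | (dupProj D p.1, c) ∈ a ∧ (c, dupProj D p.2) ∈ b ∧ (τ₁ = true → c ∈ D)}.ncard
      else 0 := by
  set M := {c' | (p.1, c') ∈ dupLift D σ₁ τ₁ a ∧ (c', p.2) ∈ dupLift D σ₂ τ₂ b}
  split_ifs with h
  · obtain ⟨h₁, h₂, rfl⟩ := h
    have hM : dupProj D '' M =
        {c | (dupProj D p.1, c) ∈ a ∧ (c, dupProj D p.2) ∈ b ∧ (τ₁ = true → c ∈ D)} := by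
      ext c
      constructor
      · rintro ⟨c', ⟨⟨-, hc', hac⟩, -, -, hcb⟩, rfl⟩
        refine ⟨hac, hcb, fun hτ => ?_⟩
        cases c' with
        | inl _ => simp_all
        | inr d => exact d.2
      · rintro ⟨hac, hcb, hD⟩
        cases τ₁ with
        | false => exact ⟨Sum.inl c, ⟨⟨h₁, rfl, hac⟩, rfl, h₂, hcb⟩, rfl⟩
        | true => exact ⟨Sum.inr ⟨c, hD rfl⟩, ⟨⟨h₁, rfl, hac⟩, rfl, h₂, hcb⟩, rfl⟩
    rw [interNum, ← hM, InjOn.ncard_image]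
    rintro x ⟨⟨-, hx, -⟩, -⟩ y ⟨⟨-, hy, -⟩, -⟩ hxy
    exact eq_of_dupProj_eq (hx.trans hy.symm) hxy
  · have hM : M = ∅ := eq_empty_of_forall_notMem fun c ⟨⟨e₁, e₂, _⟩, e₃, e₄, _⟩ =>
      h ⟨e₁, e₄, e₂.symm.trans e₃⟩
    rw [interNum]
    change M.ncard = 0
    rw [hM, ncard_empty]

end Duplication

namespace CoherentConfiguration

variable {C : Type*} [Finite C] (W : CoherentConfiguration C) {D : Set C}

open Classical in
lemma ncard_middle_eq (hD : diagRel D ∈ W.S) {a : Set (C × C)} (ha : a ∈ W.S) (b : Set (C × C))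
    (τ : Bool) (x y : C) :
    {c | (x, c) ∈ a ∧ (c, y) ∈ b ∧ (τ = true → c ∈ D)}.ncard =
      if τ = true → ∀ q ∈ a, q.2 ∈ D then interNum a b (x, y) else 0 := by
  split_ifs with h
  · congr 1
    ext c
    exact ⟨fun hc => ⟨hc.1, hc.2.1⟩, fun hc => ⟨hc.1, hc.2, fun hτ => h hτ _ hc.1⟩⟩
  · obtain ⟨hτ, hnot⟩ := Classical.not_imp.mp h
    have hout := (W.forall_snd_mem_or_forall_snd_not_mem hD ha).resolve_left hnot
    have : {c | (x, c) ∈ a ∧ (c, y) ∈ b ∧ (τ = true → c ∈ D)} = ∅ :=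
      eq_empty_of_forall_notMem fun c hc => hout _ hc.1 (hc.2.2 hτ)
    rw [this, ncard_empty]

open Classical in
lemma interNum_dupLift_of_mem (hD : diagRel D ∈ W.S) {a : Set (C × C)} (ha : a ∈ W.S)
    (b c : Set (C × C)) {σ₁ τ₁ σ₂ τ₂ σ τ : Bool} {p : (C ⊕ ↥D) × (C ⊕ ↥D)}
    (hp : p ∈ dupLift D σ τ c) :
    interNum (dupLift D σ₁ τ₁ a) (dupLift D σ₂ τ₂ b) p =
      if σ = σ₁ ∧ τ = τ₂ ∧ τ₁ = σ₂ ∧ (τ₁ = true → ∀ q ∈ a, q.2 ∈ D) then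
        interNum a b (dupProj D p.1, dupProj D p.2)
      else 0 := by
  obtain ⟨h₁, h₂, -⟩ := hp
  rw [interNum_dupLift, h₁, h₂, W.ncard_middle_eq hD ha]
  split_ifs <;> first | rfl | tauto

def dup (D : Set C) (hD : diagRel D ∈ W.S) : CoherentConfiguration (C ⊕ ↥D) where
  S := {u | u.Nonempty ∧ ∃ σ τ, ∃ t ∈ W.S, u = dupLift D σ τ t}
  isPartition := by
    refine ⟨fun h => h.1.ne_empty rfl, fun p => ?_⟩
    refine ⟨dupLift D p.1.isRight p.2.isRight (W.classOf (dupProj D p.1, dupProj D p.2)),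
      ⟨⟨⟨p, rfl, rfl, W.mem_classOf _⟩, _, _, _, W.classOf_mem _, rfl⟩, rfl, rfl,
        W.mem_classOf _⟩, ?_⟩
    rintro _ ⟨⟨-, σ, τ, t, ht, rfl⟩, rfl, rfl, hp⟩
    rw [W.classOf_eq ht hp]
  diag_isRelation := by
    refine ⟨{u | (u.Nonempty ∧ ∃ σ τ, ∃ t ∈ W.S, u = dupLift D σ τ t) ∧ u ⊆ diagRel univ},
      fun u hu => hu.1, ?_⟩
    ext ⟨x, y⟩
    constructor
    · rintro ⟨u, ⟨-, hu⟩, hxy⟩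
      exact hu hxy
    · rintro ⟨h, -⟩
      obtain rfl : x = y := h
      refine ⟨dupLift D x.isRight x.isRight (W.classOf (dupProj D x, dupProj D x)),
        ⟨⟨⟨(x, x), rfl, rfl, W.mem_classOf _⟩, _, _, _, W.classOf_mem _, rfl⟩, ?_⟩,
        rfl, rfl, W.mem_classOf _⟩
      rintro ⟨z₁, z₂⟩ ⟨h₁, h₂, h₃⟩
      exact ⟨eq_of_dupProj_eq (h₁.trans h₂.symm)
        (W.subset_diagRel_of_mem (W.classOf_mem _) (W.mem_classOf _) h₃).1, trivial⟩
  swap_mem := by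
    rintro _ ⟨⟨q, hq⟩, σ, τ, t, ht, rfl⟩
    exact ⟨⟨(q.2, q.1), hq⟩, τ, σ, swapRel t, W.swapRel_mem ht, swapRel_dupLift D σ τ t⟩
  coherent := by
    rintro _ ⟨-, σ₁, τ₁, a, ha, rfl⟩ _ ⟨-, σ₂, τ₂, b, hb, rfl⟩ _ ⟨-, σ₃, τ₃, c, hc, rfl⟩ p hp q hq
    rw [W.interNum_dupLift_of_mem hD ha b c hp, W.interNum_dupLift_of_mem hD ha b c hq]
    split_ifs
    · exact W.coherent a ha b hb c hc _ hp.2.2 _ hq.2.2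
    · rfl

lemma dupLift_nonempty_iff (hD : diagRel D ∈ W.S) {σ τ : Bool} {t : Set (C × C)}
    (ht : t ∈ W.S) :
    (dupLift D σ τ t).Nonempty ↔
      (σ = true → ∀ p ∈ t, p.1 ∈ D) ∧ (τ = true → ∀ p ∈ t, p.2 ∈ D) := by
  constructor
  · rintro ⟨⟨x, y⟩, rfl, rfl, hxy⟩
    refine ⟨fun hx => ?_, fun hy => ?_⟩
    · refine (W.forall_fst_mem_or_forall_fst_not_mem hD ht).resolve_right fun h => ?_
      cases x with
      | inl _ => simp at hx
      | inr d => exact h _ hxy d.2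
    · refine (W.forall_snd_mem_or_forall_snd_not_mem hD ht).resolve_right fun h => ?_
      cases y with
      | inl _ => simp at hy
      | inr d => exact h _ hxy d.2
  · rintro ⟨hσ, hτ⟩
    obtain ⟨⟨x, y⟩, hxy⟩ := W.nonempty_of_mem ht
    let lift : ∀ (b : Bool) (z : C), (b = true → z ∈ D) → C ⊕ ↥D := fun b z hz =>
      if hb : b = true then Sum.inr ⟨z, hz hb⟩ else Sum.inl z
    have hlift : ∀ b z hz, (lift b z hz).isRight = b ∧ dupProj D (lift b z hz) = z := by
      intro b z hz
      cases b <;> simp [lift, dupProj]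
    refine ⟨(lift σ x fun h => hσ h _ hxy, lift τ y fun h => hτ h _ hxy),
      (hlift _ _ _).1, (hlift _ _ _).1, ?_⟩
    rw [(hlift _ _ _).2, (hlift _ _ _).2]
    exact hxy

end CoherentConfiguration

namespace AlgIso

variable {C C' : Type*} {W : CoherentConfiguration C} {W' : CoherentConfiguration C'}
  (ψ : AlgIso W W') {D : Set C} {D' : Set C'}

open Classical in
noncomputable def dupFun (D : Set C) (D' : Set C') (u : Set ((C ⊕ ↥D) × (C ⊕ ↥D))) :
    Set ((C' ⊕ ↥D') × (C' ⊕ ↥D')) :=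
  if h : u.Nonempty then
    dupLift D' h.some.1.isRight h.some.2.isRight
      (ψ.toFun (W.classOf (dupProj D h.some.1, dupProj D h.some.2)))
  else ∅

lemma dupFun_dupLift {σ τ : Bool} {t : Set (C × C)} (ht : t ∈ W.S)
    (hne : (dupLift D σ τ t).Nonempty) :
    ψ.dupFun D D' (dupLift D σ τ t) = dupLift D' σ τ (ψ.toFun t) := by
  obtain ⟨h₁, h₂, h₃⟩ := hne.some_mem
  rw [dupFun, dif_pos hne, h₁, h₂, W.classOf_eq ht h₃]

variable [Finite C] [Finite C']

lemma dupLift_nonempty_iff (hD : diagRel D ∈ W.S) (hD' : ψ.toFun (diagRel D) = diagRel D')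
    {σ τ : Bool} {t : Set (C × C)} (ht : t ∈ W.S) :
    (dupLift D σ τ t).Nonempty ↔ (dupLift D' σ τ (ψ.toFun t)).Nonempty := by
  rw [W.dupLift_nonempty_iff hD ht, W'.dupLift_nonempty_iff (hD' ▸ ψ.mapsTo hD) (ψ.mapsTo ht),
    ψ.forall_fst_mem_iff hD hD' ht, ψ.forall_snd_mem_iff hD hD' ht]

noncomputable def dup (hD : diagRel D ∈ W.S) (hD' : ψ.toFun (diagRel D) = diagRel D') :
    AlgIso (W.dup D hD) (W'.dup D' (hD' ▸ ψ.mapsTo hD)) where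
  toFun := ψ.dupFun D D'
  bijOn := by
    refine ⟨?_, ?_, ?_⟩
    · rintro _ ⟨hne, σ, τ, t, ht, rfl⟩
      rw [ψ.dupFun_dupLift ht hne]
      exact ⟨(ψ.dupLift_nonempty_iff hD hD' ht).mp hne, σ, τ, _, ψ.mapsTo ht, rfl⟩
    · rintro _ ⟨hne₁, σ₁, τ₁, t₁, ht₁, rfl⟩ _ ⟨hne₂, σ₂, τ₂, t₂, ht₂, rfl⟩ h
      rw [ψ.dupFun_dupLift ht₁ hne₁, ψ.dupFun_dupLift ht₂ hne₂] at h
      obtain ⟨p, hp⟩ := (ψ.dupLift_nonempty_iff hD hD' ht₁).mp hne₁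
      obtain ⟨e₁, e₂, e₃⟩ := hp
      obtain ⟨f₁, f₂, f₃⟩ : p ∈ dupLift D' σ₂ τ₂ (ψ.toFun t₂) := h ▸ ⟨e₁, e₂, e₃⟩
      rw [← e₁, ← f₁, ← e₂, ← f₂,
        ψ.injective ht₁ ht₂ (W'.eq_of_mem_of_mem (ψ.mapsTo ht₁) (ψ.mapsTo ht₂) e₃ f₃)]
    · rintro _ ⟨hne', σ, τ, t', ht', rfl⟩
      obtain ⟨t, ht, rfl⟩ := ψ.exists_eq ht'
      have hne := (ψ.dupLift_nonempty_iff hD hD' ht).mpr hne'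
      exact ⟨_, ⟨hne, σ, τ, t, ht, rfl⟩, ψ.dupFun_dupLift ht hne⟩
  card_eq := by
    rintro _ ⟨hrne, σ₁, τ₁, a, ha, rfl⟩ _ ⟨hsne, σ₂, τ₂, b, hb, rfl⟩
      _ ⟨htne, σ₃, τ₃, c, hc, rfl⟩ p hp p' hp'
    rw [ψ.dupFun_dupLift ha hrne, ψ.dupFun_dupLift hb hsne]
    rw [ψ.dupFun_dupLift hc htne] at hp'
    rw [W.interNum_dupLift_of_mem hD ha b c hp,
      W'.interNum_dupLift_of_mem (hD' ▸ ψ.mapsTo hD) (ψ.mapsTo ha) _ _ hp',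
      ← ψ.forall_snd_mem_iff hD hD' ha]
    split_ifs
    · exact ψ.card_eq a ha b hb c hc _ hp.2.2 _ hp'.2.2
    · rfl

variable {hD : diagRel D ∈ W.S} {hD' : ψ.toFun (diagRel D) = diagRel D'}
  {f : C ⊕ ↥D → C' ⊕ ↥D'}

lemma image_dupLift_of_induces
    (hf : ∀ s ∈ (W.dup D hD).S, (ψ.dup hD hD').toFun s = Prod.map f f '' s)
    {σ τ : Bool} {t : Set (C × C)} (ht : t ∈ W.S) (hne : (dupLift D σ τ t).Nonempty) :
    Prod.map f f '' dupLift D σ τ t = dupLift D' σ τ (ψ.toFun t) :=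
  (hf _ ⟨hne, _, _, _, ht, rfl⟩).symm.trans (ψ.dupFun_dupLift ht hne)

lemma isRight_of_induces_dup
    (hf : ∀ s ∈ (W.dup D hD).S, (ψ.dup hD hD').toFun s = Prod.map f f '' s)
    (x : C ⊕ ↥D) : (f x).isRight = x.isRight := by
  have hx : (x, x) ∈ dupLift D x.isRight x.isRight (W.classOf (dupProj D x, dupProj D x)) :=
    ⟨rfl, rfl, W.mem_classOf _⟩
  have := ψ.image_dupLift_of_induces hf (W.classOf_mem _) ⟨_, hx⟩ ▸
    mem_image_of_mem (Prod.map f f) hx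
  exact this.1

lemma map_eq_image_of_induces_dup
    (hf : ∀ s ∈ (W.dup D hD).S, (ψ.dup hD hD').toFun s = Prod.map f f '' s) {g : C → C'}
    (hfg : ∀ x, f (Sum.inl x) = Sum.inl (g x)) {t : Set (C × C)} (ht : t ∈ W.S) :
    ψ.toFun t = Prod.map g g '' t := by
  have hne : (dupLift D false false t).Nonempty :=
    (W.dupLift_nonempty_iff hD ht).mpr ⟨nofun, nofun⟩
  ext ⟨y₁, y₂⟩
  constructor
  · intro hy
    have hmem : (Sum.inl y₁, Sum.inl y₂) ∈ Prod.map f f '' dupLift D false false t := by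
      rw [ψ.image_dupLift_of_induces hf ht hne]
      exact ⟨rfl, rfl, hy⟩
    obtain ⟨⟨x₁, x₂⟩, ⟨hx₁, hx₂, hx⟩, heq⟩ := hmem
    cases x₁ with
    | inr _ => simp at hx₁
    | inl a₁ =>
      cases x₂ with
      | inr _ => simp at hx₂
      | inl a₂ =>
        simp only [Prod.map_apply, hfg, Prod.mk.injEq, Sum.inl.injEq] at heq
        exact ⟨(a₁, a₂), hx, by rw [Prod.map_apply, heq.1, heq.2]⟩
  · rintro ⟨⟨a₁, a₂⟩, ha, heq⟩
    simp only [Prod.map_apply, Prod.mk.injEq] at heq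
    obtain ⟨rfl, rfl⟩ := heq
    have : (f (Sum.inl a₁), f (Sum.inl a₂)) ∈ dupLift D' false false (ψ.toFun t) := by
      rw [← ψ.image_dupLift_of_induces hf ht hne]
      exact ⟨(Sum.inl a₁, Sum.inl a₂), ⟨rfl, rfl, ha⟩, rfl⟩
    rw [hfg, hfg] at this
    exact this.2.2

end AlgIso

lemma CoherentConfiguration.bijOn_image {A B : Type*} {Z : CoherentConfiguration A}
    {Z' : CoherentConfiguration B} {h : A → B} (hh : Function.Bijective h)
    (hmaps : ∀ s ∈ Z.S, Prod.map h h '' s ∈ Z'.S) :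
    BijOn (fun s => Prod.map h h '' s) Z.S Z'.S := by
  refine ⟨hmaps, fun s _ t _ hst => image_injective.mpr (hh.1.prodMap hh.1) hst, ?_⟩
  intro u hu
  obtain ⟨q, hq⟩ := Z'.nonempty_of_mem hu
  obtain ⟨p, rfl⟩ := (hh.prodMap hh).2 q
  refine ⟨Z.classOf p, Z.classOf_mem p, ?_⟩
  exact Z'.eq_of_mem_of_mem (hmaps _ (Z.classOf_mem p)) hu ⟨p, Z.mem_classOf p, rfl⟩ hq

lemma CCSeparable.of_bijective {A B : Type u} {Z : CoherentConfiguration A}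
    {Z' : CoherentConfiguration B} (hZ : CCSeparable Z) {h : A → B}
    (hh : Function.Bijective h) (hmaps : ∀ s ∈ Z.S, Prod.map h h '' s ∈ Z'.S) :
    CCSeparable Z' := by
  intro Ω'' hfin X'' φ
  have hbij := CoherentConfiguration.bijOn_image hh hmaps
  obtain ⟨f, hf, hfφ⟩ := hZ Ω'' hfin X'' ((AlgIso.ofImage h hh.1 hbij).trans φ)
  set e := Equiv.ofBijective h hh
  refine ⟨f ∘ e.symm, hf.comp e.symm.bijective, fun s' hs' => ?_⟩
  obtain ⟨s, hs, rfl⟩ := hbij.2.2 hs'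
  calc φ.toFun (Prod.map h h '' s) = Prod.map f f '' s := hfφ s hs
    _ = _ := by
      rw [image_image]
      refine image_congr fun p _ => ?_
      exact Prod.ext (congrArg f (e.symm_apply_apply p.1).symm)
        (congrArg f (e.symm_apply_apply p.2).symm)

lemma CCSeparable.of_dup {C : Type u} [Finite C] {W : CoherentConfiguration C} {D : Set C}
    {hD : diagRel D ∈ W.S} (hsep : CCSeparable (W.dup D hD)) : CCSeparable W := by
  intro C'' hfin W'' ψ
  set D'' := {a | (a, a) ∈ ψ.toFun (diagRel D)}
  have hD'' : ψ.toFun (diagRel D) = diagRel D'' :=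
    eq_diagRel_of_subset (ψ.subset_diagRel hD (diagRel_subset_univ D))
  obtain ⟨f, hf, hfψ⟩ := hsep (C'' ⊕ ↥D'') inferInstance _ (ψ.dup hD hD'')
  have hside := ψ.isRight_of_induces_dup hfψ
  set g : C → C'' := fun x => dupProj D'' (f (Sum.inl x))
  have hfg : ∀ x, f (Sum.inl x) = Sum.inl (g x) := by
    intro x
    have := hside (Sum.inl x)
    cases hfx : f (Sum.inl x) with
    | inl y => simp [g, hfx, dupProj]
    | inr d => simp [hfx] at this
  refine ⟨g, ⟨fun x y hxy => Sum.inl_injective (hf.1 ?_), fun y => ?_⟩, fun t ht => ?_⟩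
  · rw [hfg, hfg, hxy]
  · obtain ⟨x, hx⟩ := hf.2 (Sum.inl y)
    cases x with
    | inl x => exact ⟨x, Sum.inl_injective ((hfg x).symm.trans hx)⟩
    | inr d => simpa [hx] using hside (Sum.inr d)
  exact ψ.map_eq_image_of_induces_dup hfψ hfg ht

/-! ### Matchings -/

section Matching

variable {A B : Type*} {m : Set (A × A)} {m' : Set (B × B)}

lemma image_eq_of_restrictRel_eq {D : Set A} {D' : Set B} {f : A → B} {g : ↥(Dᶜ) → ↥(D'ᶜ)}
    (hfg : ∀ x : ↥(Dᶜ), f x = g x) {s : Set (A × A)} {s' : Set (B × B)}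
    (hs₁ : ∀ p ∈ s, p.1 ∉ D) (hs₂ : ∀ p ∈ s, p.2 ∉ D)
    (hs₁' : ∀ p ∈ s', p.1 ∉ D') (hs₂' : ∀ p ∈ s', p.2 ∉ D')
    (h : restrictRel D' s' = Prod.map g g '' restrictRel D s) : s' = Prod.map f f '' s := by
  ext ⟨x, y⟩
  constructor
  · intro hxy
    have : (⟨x, hs₁' _ hxy⟩, ⟨y, hs₂' _ hxy⟩) ∈ restrictRel D' s' := hxy
    rw [h] at this
    obtain ⟨⟨u, v⟩, huv, heq⟩ := this
    simp only [Prod.map_apply, Prod.mk.injEq] at heq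
    exact ⟨(u, v), huv, by rw [Prod.map_apply, hfg, hfg, heq.1, heq.2]⟩
  · rintro ⟨⟨a, b⟩, hab, heq⟩
    simp only [Prod.map_apply, Prod.mk.injEq] at heq
    obtain ⟨rfl, rfl⟩ := heq
    have : (g ⟨a, hs₁ _ hab⟩, g ⟨b, hs₂ _ hab⟩) ∈ restrictRel D' s' :=
      h ▸ ⟨(⟨a, hs₁ _ hab⟩, ⟨b, hs₂ _ hab⟩), hab, rfl⟩
    simpa only [mem_restrictRel, ← hfg] using this

lemma mem_iff_of_image_diagRel {g : A → B} (hg : Function.Injective g) {E : Set B} {F : Set A}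
    (h : diagRel E = Prod.map g g '' diagRel F) (x : A) : g x ∈ E ↔ x ∈ F := by
  constructor
  · intro hx
    have : (g x, g x) ∈ diagRel E := ⟨rfl, hx⟩
    rw [h] at this
    obtain ⟨⟨u, v⟩, ⟨-, hu⟩, heq⟩ := this
    obtain rfl : u = x := hg (congrArg Prod.fst heq)
    exact hu
  · intro hx
    have : (g x, g x) ∈ Prod.map g g '' diagRel F := ⟨(x, x), ⟨rfl, hx⟩, rfl⟩
    rw [← h] at this
    exact this.2

lemma exists_extension (hmu : Relator.RightUnique fun a b => (a, b) ∈ m)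
    (hdisj : Disjoint (OmegaMinus m) (OmegaPlus m)) (g : ↥((OmegaMinus m)ᶜ) → B)
    (hgΓ : ∀ x : ↥((OmegaMinus m)ᶜ), (x : A) ∈ OmegaPlus m → g x ∈ OmegaPlus m') :
    ∃ f : A → B, (∀ x : ↥((OmegaMinus m)ᶜ), f x = g x) ∧ ∀ {a b}, (a, b) ∈ m → (f a, f b) ∈ m' := by
  have hΓ : ∀ {a b}, (a, b) ∈ m → b ∉ OmegaMinus m := fun hab hb =>
    disjoint_left.mp hdisj hb ⟨_, hab⟩
  have H : ∀ a, ∃ β : B, (∀ ha : a ∉ OmegaMinus m, β = g ⟨a, ha⟩) ∧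
      ∀ b (hab : (a, b) ∈ m), (β, g ⟨b, hΓ hab⟩) ∈ m' := by
    intro a
    by_cases ha : a ∈ OmegaMinus m
    · obtain ⟨b, hab⟩ := ha
      obtain ⟨β, hβ⟩ := hgΓ ⟨b, hΓ hab⟩ ⟨a, hab⟩
      refine ⟨β, fun h => absurd ⟨b, hab⟩ h, fun b' hab' => ?_⟩
      obtain rfl := hmu hab hab'
      exact hβ
    · exact ⟨g ⟨a, ha⟩, fun _ => rfl, fun b hab => absurd ⟨b, hab⟩ ha⟩
  choose f hfg hfm using H
  have hfg' : ∀ x : ↥((OmegaMinus m)ᶜ), f x = g x := fun x => hfg x x.2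
  exact ⟨f, hfg', fun hab => hfg' ⟨_, hΓ hab⟩ ▸ hfm _ _ hab⟩

lemma image_eq_of_extension (hm'u : Relator.LeftUnique fun a b => (a, b) ∈ m')
    (hdisj' : Disjoint (OmegaMinus m') (OmegaPlus m'))
    {g : ↥((OmegaMinus m)ᶜ) → ↥((OmegaMinus m')ᶜ)} (hg : Function.Surjective g)
    (hgΓ : ∀ x, (g x : B) ∈ OmegaPlus m' → (x : A) ∈ OmegaPlus m) {f : A → B}
    (hfg : ∀ x : ↥((OmegaMinus m)ᶜ), f x = g x) (hfm : ∀ {a b}, (a, b) ∈ m → (f a, f b) ∈ m') :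
    Prod.map f f '' m = m' := by
  ext ⟨x, y⟩
  refine ⟨?_, fun hxy => ?_⟩
  · rintro ⟨⟨a, b⟩, hab, heq⟩
    rw [← heq]
    exact hfm hab
  · obtain ⟨c, hc⟩ := hg ⟨y, fun hy => disjoint_left.mp hdisj' hy ⟨x, hxy⟩⟩
    obtain ⟨a, hac⟩ := hgΓ c (hc ▸ ⟨x, hxy⟩)
    have hfc : f c = y := (hfg c).trans (congrArg Subtype.val hc)
    refine ⟨(a, c), hac, ?_⟩
    rw [Prod.map_apply, hfc, hm'u (hfm hac) (hfc ▸ hxy)]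

lemma bijective_of_extension (hmu : Relator.LeftUnique fun a b => (a, b) ∈ m)
    (hm'u : Relator.RightUnique fun a b => (a, b) ∈ m')
    (hdisj : Disjoint (OmegaMinus m) (OmegaPlus m))
    {g : ↥((OmegaMinus m)ᶜ) → ↥((OmegaMinus m')ᶜ)} (hg : Function.Bijective g) {f : A → B}
    (hfg : ∀ x : ↥((OmegaMinus m)ᶜ), f x = g x) (hfm : Prod.map f f '' m = m') :
    Function.Bijective f := by
  have hΓ : ∀ {a b}, (a, b) ∈ m → b ∉ OmegaMinus m := fun hab hb =>
    disjoint_left.mp hdisj hb ⟨_, hab⟩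
  have hmm' : ∀ {a b}, (a, b) ∈ m → (f a, f b) ∈ m' := fun hab => hfm ▸ ⟨_, hab, rfl⟩
  have hout : ∀ x : ↥((OmegaMinus m)ᶜ), f x ∉ OmegaMinus m' := fun x => hfg x ▸ (g x).2
  refine ⟨fun a₁ a₂ h => ?_, fun y => ?_⟩
  · by_cases h₁ : a₁ ∈ OmegaMinus m <;> by_cases h₂ : a₂ ∈ OmegaMinus m
    · obtain ⟨b₁, hb₁⟩ := h₁
      obtain ⟨b₂, hb₂⟩ := h₂
      have := hm'u (h ▸ hmm' hb₁) (hmm' hb₂)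
      rw [hfg ⟨_, hΓ hb₁⟩, hfg ⟨_, hΓ hb₂⟩] at this
      obtain rfl : b₁ = b₂ := congrArg Subtype.val (hg.1 (Subtype.val_injective this))
      exact hmu hb₁ hb₂
    · obtain ⟨b₁, hb₁⟩ := h₁
      exact (hout ⟨a₂, h₂⟩ (h ▸ (⟨_, hmm' hb₁⟩ : f a₁ ∈ OmegaMinus m'))).elim
    · obtain ⟨b₂, hb₂⟩ := h₂
      exact (hout ⟨a₁, h₁⟩ (h ▸ (⟨_, hmm' hb₂⟩ : f a₂ ∈ OmegaMinus m'))).elim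
    · have := (hfg ⟨a₁, h₁⟩).symm.trans (h.trans (hfg ⟨a₂, h₂⟩))
      exact congrArg Subtype.val (hg.1 (Subtype.val_injective this))
  · by_cases hy : y ∈ OmegaMinus m'
    · obtain ⟨z, hyz⟩ := hy
      obtain ⟨⟨a, b⟩, -, heq⟩ := hfm.symm ▸ hyz
      exact ⟨a, congrArg Prod.fst heq⟩
    · obtain ⟨x, hx⟩ := hg.2 ⟨y, hy⟩
      exact ⟨x, (hfg x).trans (congrArg Subtype.val hx)⟩

end Matching

namespace CoherentConfiguration

variable {A : Type*} [Finite A] (Z : CoherentConfiguration A) {m : Set (A × A)}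

/-- A basis relation `s` with sources in `Ω₋(m)` is `m ∘ (m* ∘ s)`, where `m* ∘ s` is a basis
relation with sources in `Ω₊(m)`; targets are moved to sources by transposing. -/
theorem induction_on_matching (hm : m ∈ Z.S) (hmu : Relator.BiUnique fun a b => (a, b) ∈ m)
    (hdisj : Disjoint (OmegaMinus m) (OmegaPlus m)) {P : Set (A × A) → Prop}
    (avoid : ∀ s ∈ Z.S, (∀ p ∈ s, p.1 ∉ OmegaMinus m) → (∀ p ∈ s, p.2 ∉ OmegaMinus m) → P s)
    (swap : ∀ s ∈ Z.S, P s → P (swapRel s))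
    (comp : ∀ r ∈ Z.S, (∀ p ∈ r, p.1 ∈ OmegaPlus m) → P r → P (relComp m r))
    {s : Set (A × A)} (hs : s ∈ Z.S) : P s := by
  have hΔ := Z.diagRel_OmegaMinus_mem hm
  have hr : ∀ {s}, s ∈ Z.S → (∀ p ∈ s, p.1 ∈ OmegaMinus m) →
      relComp (swapRel m) s ∈ Z.S ∧ (∀ p ∈ relComp (swapRel m) s, p.1 ∈ OmegaPlus m) ∧
        (P (relComp (swapRel m) s) → P s) := by
    intro s hs hsrc
    have hrS := Z.relComp_mem (Z.swapRel_mem hm) (fun _ _ _ h₁ h₂ => hmu.2 h₁ h₂) hs hsrc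
    have hrsrc : ∀ p ∈ relComp (swapRel m) s, p.1 ∈ OmegaPlus m := fun p ⟨c, hc, _⟩ => ⟨c, hc⟩
    refine ⟨hrS, hrsrc, fun hP => ?_⟩
    rw [← relComp_relComp_swapRel hmu.1 hsrc]
    exact comp _ hrS hrsrc hP
  have hnot : ∀ {r : Set (A × A)}, (∀ p ∈ r, p.1 ∈ OmegaPlus m) → ∀ p ∈ r, p.1 ∉ OmegaMinus m :=
    fun h p hp hpΔ => disjoint_left.mp hdisj hpΔ (h p hp)
  have htgt : ∀ s ∈ Z.S, (∀ p ∈ s, p.2 ∉ OmegaMinus m) → P s := by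
    intro s hs h₂
    rcases Z.forall_fst_mem_or_forall_fst_not_mem hΔ hs with h₁ | h₁
    · obtain ⟨hrS, hrsrc, hP⟩ := hr hs h₁
      exact hP (avoid _ hrS (hnot hrsrc) fun _ ⟨c, _, hc⟩ => h₂ (c, _) hc)
    · exact avoid s hs h₁ h₂
  have hsrc : ∀ s ∈ Z.S, (∀ p ∈ s, p.1 ∉ OmegaMinus m) → P s := fun s hs h₁ =>
    swap _ (Z.swapRel_mem hs) (htgt _ (Z.swapRel_mem hs) fun p hp => h₁ _ hp)
  rcases Z.forall_fst_mem_or_forall_fst_not_mem hΔ hs with h₁ | h₁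
  · obtain ⟨hrS, hrsrc, hP⟩ := hr hs h₁
    exact hP (hsrc _ hrS (hnot hrsrc))
  · exact hsrc s hs h₁

end CoherentConfiguration

lemma CCSeparable.of_restrict {A : Type u} [Finite A] {X : CoherentConfiguration A}
    {m : Set (A × A)} (hm : m ∈ X.S) (hmu : Relator.BiUnique fun a b => (a, b) ∈ m)
    (hne : OmegaMinus m ≠ OmegaPlus m)
    (hsep : CCSeparable (X.restrict (OmegaMinus m) (X.diagRel_OmegaMinus_mem hm))) :
    CCSeparable X := by
  intro B hfin X' φ
  have hΔ := X.diagRel_OmegaMinus_mem hm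
  have hΓ := X.diagRel_OmegaPlus_mem hm
  have hΔ' := φ.map_diagRel_OmegaMinus hm
  have hΓ' := φ.map_diagRel_OmegaPlus hm
  have hdisj := X.disjoint_of_diagRel_mem hΔ hΓ hne
  have hdisj' := X'.disjoint_of_diagRel_mem (hΔ' ▸ φ.mapsTo hΔ) (hΓ' ▸ φ.mapsTo hΓ)
    fun h => hne (diagRel_injective (φ.injective hΔ hΓ (by rw [hΔ', hΓ', h])))
  obtain ⟨g, hg, hgψ⟩ := hsep _ inferInstance _ (φ.restrict hΔ hΔ')
  have hgψ' : ∀ s ∈ X.S, (∀ p ∈ s, p.1 ∉ OmegaMinus m) → (∀ p ∈ s, p.2 ∉ OmegaMinus m) →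
      restrictRel (OmegaMinus (φ.toFun m)) (φ.toFun s) =
        Prod.map g g '' restrictRel (OmegaMinus m) s := fun s hs h₁ h₂ =>
    (φ.restrictFun_restrictRel hs ((X.restrictRel_nonempty_iff hΔ hs).mpr ⟨h₁, h₂⟩)).symm.trans
      (hgψ _ (X.mem_restrict_S hs h₁ h₂))
  have hΓΔ : ∀ p ∈ diagRel (OmegaPlus m), p.1 ∉ OmegaMinus m :=
    fun p hp hpΔ => disjoint_left.mp hdisj hpΔ hp.2
  have hgΓ := mem_iff_of_image_diagRel hg.1 (by
    rw [← restrictRel_diagRel, ← restrictRel_diagRel, ← hΓ']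
    exact hgψ' _ hΓ hΓΔ fun p hp => hp.1 ▸ hΓΔ p hp)
  obtain ⟨f, hfg, hfm⟩ := exists_extension hmu.2 hdisj (fun x => (g x : B))
    fun x => (hgΓ x).mpr
  replace hfm := image_eq_of_extension (φ.leftUnique hm hmu.1) hdisj' hg.2
    (fun x => (hgΓ x).mp) hfg hfm
  have hf := bijective_of_extension hmu.1 (φ.rightUnique hm hmu.2) hdisj hg hfg hfm
  refine ⟨f, hf, fun s hs =>
    X.induction_on_matching (P := fun s => φ.toFun s = Prod.map f f '' s) hm hmu hdisj ?_ ?_ ?_ hs⟩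
  · intro s hs h₁ h₂
    exact image_eq_of_restrictRel_eq hfg h₁ h₂ ((φ.forall_fst_not_mem_iff hΔ hΔ' hs).mp h₁)
      ((φ.forall_snd_not_mem_iff hΔ hΔ' hs).mp h₂) (hgψ' s hs h₁ h₂)
  · intro s hs h
    rw [φ.map_swapRel hs, h, image_swapRel]
  · intro r hr hrsrc h
    rw [φ.map_relComp hm hmu.1 hr hrsrc, h, ← hfm, image_relComp hf.1]

section DupMatching

variable {A : Type*} {m : Set (A × A)}

lemma image_eq_dupLift_of_avoid {D : Set ↥((OmegaMinus m)ᶜ)}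
    {h : A → ↥((OmegaMinus m)ᶜ) ⊕ ↥D} (hinl : ∀ x : ↥((OmegaMinus m)ᶜ), h x = Sum.inl x)
    {s : Set (A × A)} (h₁ : ∀ p ∈ s, p.1 ∉ OmegaMinus m) (h₂ : ∀ p ∈ s, p.2 ∉ OmegaMinus m) :
    Prod.map h h '' s = dupLift D false false (restrictRel (OmegaMinus m) s) := by
  ext ⟨x, y⟩
  constructor
  · rintro ⟨⟨a, b⟩, hab, heq⟩
    simp only [Prod.map_apply, Prod.mk.injEq] at heq
    rw [← heq.1, ← heq.2, hinl ⟨a, h₁ _ hab⟩, hinl ⟨b, h₂ _ hab⟩]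
    exact ⟨rfl, rfl, hab⟩
  · rintro ⟨hx, hy, hxy⟩
    cases x with
    | inr _ => simp at hx
    | inl x =>
      cases y with
      | inr _ => simp at hy
      | inl y => exact ⟨((x : A), (y : A)), hxy, by rw [Prod.map_apply, hinl, hinl]⟩

lemma exists_bijective_sum (hmu : Relator.BiUnique fun a b => (a, b) ∈ m)
    (hdisj : Disjoint (OmegaMinus m) (OmegaPlus m)) :
    ∃ h : A → ↥((OmegaMinus m)ᶜ) ⊕ ↥(restrictSet (OmegaMinus m) (OmegaPlus m)),
      Function.Bijective h ∧ (∀ x : ↥((OmegaMinus m)ᶜ), h x = Sum.inl x) ∧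
        ∀ a b, (a, b) ∈ m → (h a).isRight = true ∧ (dupProj _ (h a)).1 = b := by
  have hΓ : ∀ {a b}, (a, b) ∈ m → b ∉ OmegaMinus m := fun hab hb =>
    disjoint_left.mp hdisj hb ⟨_, hab⟩
  have H : ∀ a, ∃ y : ↥((OmegaMinus m)ᶜ) ⊕ ↥(restrictSet (OmegaMinus m) (OmegaPlus m)),
      (∀ ha : a ∉ OmegaMinus m, y = Sum.inl ⟨a, ha⟩) ∧
        ∀ b (hab : (a, b) ∈ m), y = Sum.inr ⟨⟨b, hΓ hab⟩, a, hab⟩ := by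
    intro a
    by_cases ha : a ∈ OmegaMinus m
    · obtain ⟨b, hab⟩ := ha
      refine ⟨Sum.inr ⟨⟨b, hΓ hab⟩, a, hab⟩, fun h => absurd ⟨b, hab⟩ h, fun b' hab' => ?_⟩
      obtain rfl := hmu.2 hab hab'
      rfl
    · exact ⟨Sum.inl ⟨a, ha⟩, fun _ => rfl, fun b hab => absurd ⟨b, hab⟩ ha⟩
  choose h hinl hinr using H
  refine ⟨h, ⟨fun a₁ a₂ heq => ?_, ?_⟩, fun x => hinl x x.2,
    fun a b hab => by rw [hinr a b hab]; exact ⟨rfl, rfl⟩⟩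
  · by_cases h₁ : a₁ ∈ OmegaMinus m <;> by_cases h₂ : a₂ ∈ OmegaMinus m
    · obtain ⟨b₁, hb₁⟩ := h₁
      obtain ⟨b₂, hb₂⟩ := h₂
      rw [hinr _ _ hb₁, hinr _ _ hb₂] at heq
      obtain rfl : b₁ = b₂ :=
        congrArg (fun c : ↥(restrictSet (OmegaMinus m) (OmegaPlus m)) => c.1.1)
          (Sum.inr_injective heq)
      exact hmu.1 hb₁ hb₂
    · obtain ⟨b₁, hb₁⟩ := h₁
      simp [hinr _ _ hb₁, hinl _ h₂] at heq
    · obtain ⟨b₂, hb₂⟩ := h₂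
      simp [hinr _ _ hb₂, hinl _ h₁] at heq
    · rw [hinl _ h₁, hinl _ h₂, Sum.inl.injEq, Subtype.mk.injEq] at heq
      exact heq
  · rintro (x | ⟨⟨b, hb⟩, a, hab⟩)
    · exact ⟨x, hinl x x.2⟩
    · exact ⟨a, hinr a b hab⟩

lemma image_matching_eq (hdisj : Disjoint (OmegaMinus m) (OmegaPlus m))
    {h : A → ↥((OmegaMinus m)ᶜ) ⊕ ↥(restrictSet (OmegaMinus m) (OmegaPlus m))}
    (hinl : ∀ x : ↥((OmegaMinus m)ᶜ), h x = Sum.inl x)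
    (hinr : ∀ a b, (a, b) ∈ m → (h a).isRight = true ∧ (dupProj _ (h a)).1 = b) :
    Prod.map h h '' m =
      dupLift _ true false (diagRel (restrictSet (OmegaMinus m) (OmegaPlus m))) := by
  have hΓ : ∀ {b}, b ∈ OmegaPlus m → b ∉ OmegaMinus m := fun hb hb' =>
    disjoint_left.mp hdisj hb' hb
  ext ⟨x, y⟩
  constructor
  · rintro ⟨⟨a, b⟩, hab, heq⟩
    simp only [Prod.map_apply, Prod.mk.injEq] at heq
    obtain ⟨rfl, rfl⟩ := heq
    obtain ⟨hr, hp⟩ := hinr a b hab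
    rw [hinl ⟨b, hΓ ⟨a, hab⟩⟩]
    exact ⟨hr, rfl, Subtype.val_injective hp, a, hp ▸ hab⟩
  · rintro ⟨hx, hy, hxy, hmem⟩
    cases y with
    | inr _ => simp at hy
    | inl y =>
      have hxy' : dupProj (restrictSet (OmegaMinus m) (OmegaPlus m)) x = y := hxy
      obtain ⟨a, hay⟩ : ((y : ↥((OmegaMinus m)ᶜ)) : A) ∈ OmegaPlus m := hxy' ▸ hmem
      refine ⟨(a, y), hay, ?_⟩
      obtain ⟨hr, hp⟩ := hinr a y hay
      rw [Prod.map_apply, hinl,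
        eq_of_dupProj_eq (hr.trans hx.symm) ((Subtype.val_injective hp).trans hxy'.symm)]

end DupMatching

lemma CCSeparable.restrict {A : Type u} [Finite A] {X : CoherentConfiguration A}
    {m : Set (A × A)} (hm : m ∈ X.S) (hmu : Relator.BiUnique fun a b => (a, b) ∈ m)
    (hne : OmegaMinus m ≠ OmegaPlus m) (hsep : CCSeparable X) :
    CCSeparable (X.restrict (OmegaMinus m) (X.diagRel_OmegaMinus_mem hm)) := by
  set Y := X.restrict (OmegaMinus m) (X.diagRel_OmegaMinus_mem hm)
  have hdisj := X.disjoint_of_diagRel_mem (X.diagRel_OmegaMinus_mem hm)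
    (X.diagRel_OmegaPlus_mem hm) hne
  have hΓ : ∀ p ∈ diagRel (OmegaPlus m), p.1 ∉ OmegaMinus m :=
    fun p hp hpΔ => disjoint_left.mp hdisj hpΔ hp.2
  have hΓY : diagRel (restrictSet (OmegaMinus m) (OmegaPlus m)) ∈ Y.S :=
    restrictRel_diagRel (OmegaMinus m) (OmegaPlus m) ▸
      X.mem_restrict_S (X.diagRel_OmegaPlus_mem hm) hΓ fun p hp => hp.1 ▸ hΓ p hp
  obtain ⟨h, hh, hinl, hinr⟩ := exists_bijective_sum hmu hdisj
  refine CCSeparable.of_dup (hD := hΓY) (hsep.of_bijective hh fun s hs =>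
    ⟨(X.nonempty_of_mem hs).image _, X.induction_on_matching
      (P := fun s => ∃ σ τ, ∃ t ∈ Y.S, Prod.map h h '' s = dupLift _ σ τ t)
      hm hmu hdisj ?_ ?_ ?_ hs⟩)
  · intro s hs h₁ h₂
    exact ⟨false, false, _, X.mem_restrict_S hs h₁ h₂, image_eq_dupLift_of_avoid hinl h₁ h₂⟩
  · rintro s - ⟨σ, τ, t, ht, hst⟩
    exact ⟨τ, σ, swapRel t, Y.swapRel_mem ht, by rw [image_swapRel, hst, swapRel_dupLift]⟩
  · rintro r hr hrsrc ⟨σ, τ, t, ht, hrt⟩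
    obtain ⟨⟨a, b⟩, hab⟩ := X.nonempty_of_mem hr
    have ha : a ∉ OmegaMinus m := fun haΔ => disjoint_left.mp hdisj haΔ (hrsrc _ hab)
    have hσ : (h a).isRight = σ := (hrt ▸ mem_image_of_mem (Prod.map h h) hab).1
    rw [hinl ⟨a, ha⟩] at hσ
    subst hσ
    refine ⟨true, τ, t, ht, ?_⟩
    rw [image_relComp hh.1, hrt, image_matching_eq hdisj hinl hinr]
    exact relComp_dupLift_diagRel

theorem stmt_13_general {Ω : Type u} [Fintype Ω] (G : SimpleGraph Ω)
    (X : CoherentConfiguration Ω)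
    (m : Set (Ω × Ω)) (hm : IsPendantMatching G X m ∨ IsTwinMatching G X m)
    (Δ : Set Ω) (hΔ : Δ = OmegaMinus m)
    (Y : CoherentConfiguration ↥(Δᶜ))
    (hY : Y.S = {t | t.Nonempty ∧ ∃ s ∈ X.S, t = restrictRel Δ s}) :
    CCSeparable Y ↔ CCSeparable X := by
  obtain ⟨⟨hmS, -, hfun, hinj⟩, hne⟩ : IsMatchingCC X m ∧ OmegaMinus m ≠ OmegaPlus m :=
    hm.elim (fun h => ⟨h.1, h.2.1⟩) fun h => ⟨h.1, h.2.1⟩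
  have hmu : Relator.BiUnique fun a b => (a, b) ∈ m :=
    ⟨fun _ _ _ => hinj _ _ _, fun _ _ _ => hfun _ _ _⟩
  subst hΔ
  obtain rfl : Y = X.restrict (OmegaMinus m) (X.diagRel_OmegaMinus_mem hmS) :=
    Y.ext_of_S_eq hY
  exact ⟨CCSeparable.of_restrict hmS hmu hne, CCSeparable.restrict hmS hmu hne⟩

/-- in the situation of removing a pendant or twin matching,
`WL(G)_π ∖ Δ` is separable iff `WL(G)_π` is separable. -/
theorem stmt_13 {Ω : Type u} [Fintype Ω] (G : SimpleGraph Ω)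
    (π : Set (Set Ω)) (X : CoherentConfiguration Ω)
    (hWL : IsWLPart G π X) (hcorrect : π = {Δ | X.IsFiber Δ})
    (m : Set (Ω × Ω)) (hm : IsPendantMatching G X m ∨ IsTwinMatching G X m)
    (Δ : Set Ω) (hΔ : Δ = OmegaMinus m)
    (Y : CoherentConfiguration ↥(Δᶜ))
    (hY : Y.S = {t | t.Nonempty ∧ ∃ s ∈ X.S, t = restrictRel Δ s}) :
    CCSeparable Y ↔ CCSeparable X :=
  stmt_13_general G X m hm Δ hΔ Y hY
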